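/- Let k be a field, let n ≥ 1 and d ≥ 2 be integers, and let g, h ∈ k[x₀,…,xₙ] be polynomials in n+1 variables with g homogeneous of degree d−1, h homogeneous of degree d, g ≠ 0, h ≠ 0, and g + h prime (irreducible) in k[x₀,…,xₙ]. Then the fraction field of the integral domain k[x₀,…,xₙ]/(g+h) is isomorphic as a k-algebra to the fraction field of the polynomial ring k[y₁,…,yₙ] in n variables, i.e., the affine hypersurface {g + h = 0} ⊂ 𝔸^{n+1} is rational over k. -/

import Mathlib

/-!
Let `c` be the image of the coordinates in the function field `K` of `{g + h = 0}`, and project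
from the origin: `vⱼ = cⱼ / c₀`. Since `g + h` divides no nonzero form, no nonzero form vanishes
at `c`; hence `c₀ ≠ 0`, and homogenizing shows that `v` is algebraically independent. Dividing
`g(c) + h(c) = 0` by `c₀ ^ (d - 1)` gives `g(1, v) + c₀ h(1, v) = 0`, so `c₀ = -g(1, v) / h(1, v)`
lies in `k(v)`, hence so does every `cᵢ = c₀ vᵢ`, and `K = k(v)` is purely transcendental.
-/

namespace MvPolynomial

variable {σ R : Type*}

theorem IsHomogeneous.aeval_mul_left [CommSemiring R] {A : Type*} [CommSemiring A] [Algebra R A]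
    {p : MvPolynomial σ R} {s : ℕ} (hp : p.IsHomogeneous s) (t : A) (u : σ → A) :
    MvPolynomial.aeval (fun i => t * u i) p = t ^ s * MvPolynomial.aeval u p := by
  conv_lhs => rw [p.as_sum]
  conv_rhs => rw [p.as_sum]
  simp only [map_sum, Finset.mul_sum, aeval_monomial, Finsupp.prod, mul_pow,
    Finset.prod_mul_distrib, Finset.prod_pow_eq_pow_sum]
  refine Finset.sum_congr rfl fun m hm => ?_
  have hdeg : m.degree = s := by
    rw [Finsupp.degree_eq_weight_one]; exact hp (mem_support_iff.mp hm)
  rw [← hdeg, Finsupp.degree_apply]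
  ring

theorem IsHomogeneous.aeval_X_mul_C [CommSemiring R] {p : MvPolynomial σ R} {s : ℕ}
    (hp : p.IsHomogeneous s) :
    MvPolynomial.aeval (fun i => Polynomial.X * Polynomial.C (X i)) p =
      Polynomial.X ^ s * Polynomial.C p := by
  rw [hp.aeval_mul_left]
  congr 1
  have hC := comp_aeval (R := R) (X : σ → MvPolynomial σ R) Polynomial.CAlgHom
  rw [aeval_X_left] at hC
  exact (AlgHom.congr_fun hC p).symm

/- Substituting `X i ↦ T * X i` sends a form `Q` of degree `N` to the monomial `T ^ N * Q`, but
sends `g + h` to `T ^ m * (g + h * T ^ (n - m))`, whose degree exceeds its trailing degree;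
over a domain both degrees are additive, so the quotient would have trailing degree larger than
its degree. -/
open Polynomial in
theorem add_not_dvd_of_isHomogeneous [CommRing R] [IsDomain R] {g h Q : MvPolynomial σ R}
    {m n N : ℕ} (hg : g.IsHomogeneous m) (hh : h.IsHomogeneous n) (hg0 : g ≠ 0) (hh0 : h ≠ 0)
    (hmn : m < n) (hQ : Q.IsHomogeneous N) (hQ0 : Q ≠ 0) : ¬ g + h ∣ Q := by
  rintro ⟨r, rfl⟩
  set ψ : MvPolynomial σ R →ₐ[R] (MvPolynomial σ R)[X] :=
    MvPolynomial.aeval fun i => Polynomial.X * Polynomial.C (X i)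
  set B : (MvPolynomial σ R)[X] := Polynomial.C g + Polynomial.C h * Polynomial.X ^ (n - m)
  have hψ : Polynomial.X ^ m * B * ψ r = Polynomial.monomial N ((g + h) * r) := by
    rw [← Polynomial.C_mul_X_pow_eq_monomial, mul_comm _ (Polynomial.X ^ N),
      ← hQ.aeval_X_mul_C, map_mul, map_add, hg.aeval_X_mul_C, hh.aeval_X_mul_C,
      show n = m + (n - m) by omega, pow_add]
    ring
  have hB0 : B.coeff 0 = g := by simp [B, (Nat.sub_pos_of_lt hmn).ne]
  have hBdeg : B.natDegree = n - m := by
    rw [natDegree_add_eq_right_of_natDegree_lt] <;> rw [natDegree_C_mul_X_pow _ _ hh0]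
    simpa using hmn
  have hB : B ≠ 0 := fun h0 => hg0 (by simp [← hB0, h0])
  have hψr : ψ r ≠ 0 := by
    rintro h0; rw [h0, mul_zero, eq_comm, monomial_eq_zero_iff] at hψ; exact hQ0 hψ
  have hXm : (Polynomial.X ^ m : (MvPolynomial σ R)[X]) ≠ 0 := pow_ne_zero _ Polynomial.X_ne_zero
  have hdeg := congrArg natDegree hψ
  have htrail := congrArg natTrailingDegree hψ
  rw [natDegree_mul (mul_ne_zero hXm hB) hψr, natDegree_mul hXm hB, natDegree_X_pow, hBdeg,
    natDegree_monomial_eq _ hQ0] at hdeg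
  rw [natTrailingDegree_mul (mul_ne_zero hXm hB) hψr, natTrailingDegree_mul hXm hB,
    natTrailingDegree_X_pow, natTrailingDegree_eq_zero.mpr (Or.inr (hB0 ▸ hg0)),
    natTrailingDegree_monomial hQ0] at htrail
  have := (ψ r).natTrailingDegree_le_natDegree
  omega

noncomputable def dehomogenize [CommSemiring R] (n : ℕ) :
    MvPolynomial (Fin (n + 1)) R →ₐ[R] MvPolynomial (Fin n) R :=
  MvPolynomial.aeval (Fin.cons 1 X)

section Dehomogenize

variable [CommSemiring R] {n : ℕ}

theorem aeval_dehomogenize {A : Type*} [CommSemiring A] [Algebra R A] (v : Fin n → A)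
    (p : MvPolynomial (Fin (n + 1)) R) :
    aeval v (dehomogenize n p) = aeval (Fin.cons 1 v) p := by
  rw [dehomogenize, ← AlgHom.comp_apply, comp_aeval]
  congr 2
  ext i
  induction i using Fin.cases <;> simp

theorem dehomogenize_rename_succ (p : MvPolynomial (Fin n) R) :
    dehomogenize n (rename Fin.succ p) = p := by
  rw [dehomogenize, aeval_rename]
  exact congrFun (congrArg DFunLike.coe (aeval_X_left (R := R))) p

theorem exists_isHomogeneous_dehomogenize_eq (q : MvPolynomial (Fin n) R) :
    ∃ Q : MvPolynomial (Fin (n + 1)) R,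
      Q.IsHomogeneous q.totalDegree ∧ dehomogenize n Q = q := by
  refine ⟨∑ e ∈ Finset.range (q.totalDegree + 1),
    X 0 ^ (q.totalDegree - e) * rename Fin.succ (homogeneousComponent e q), ?_, ?_⟩
  · refine IsHomogeneous.sum _ _ _ fun e he => ?_
    have := (isHomogeneous_X_pow (R := R) (0 : Fin (n + 1)) (q.totalDegree - e)).mul
      ((homogeneousComponent_isHomogeneous e q).rename_isHomogeneous (f := Fin.succ))
    rwa [Nat.sub_add_cancel (Nat.lt_succ_iff.mp (Finset.mem_range.mp he))] at this
  · simp only [map_sum, map_mul, map_pow, dehomogenize_rename_succ]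
    simp [dehomogenize, sum_homogeneousComponent]

theorem IsHomogeneous.aeval_eq_pow_mul_aeval_dehomogenize {K : Type*} [Field K] [Algebra R K]
    {s : ℕ} {p : MvPolynomial (Fin (n + 1)) R} (hp : p.IsHomogeneous s)
    {c : Fin (n + 1) → K} (hc : c 0 ≠ 0) :
    MvPolynomial.aeval c p =
      c 0 ^ s * MvPolynomial.aeval (fun j => c j.succ / c 0) (dehomogenize n p) := by
  rw [aeval_dehomogenize, ← hp.aeval_mul_left]
  congr 1
  ext i
  induction i using Fin.cases <;> simp [mul_div_cancel₀ _ hc]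

end Dehomogenize

end MvPolynomial

open MvPolynomial IntermediateField Set

section FunctionField

variable {k K : Type*} [Field k] [Field K] [Algebra k K] {n : ℕ} {c : Fin (n + 1) → K}

theorem algebraicIndependent_div_of_aeval_ne_zero
    (hc : ∀ (Q : MvPolynomial (Fin (n + 1)) k) (N : ℕ), Q.IsHomogeneous N → Q ≠ 0 →
      aeval c Q ≠ 0) :
    AlgebraicIndependent k fun j : Fin n => c j.succ / c 0 := by
  have hc0 : c 0 ≠ 0 := by simpa using hc (X 0) 1 (isHomogeneous_X _ _) (X_ne_zero _)
  rw [algebraicIndependent_iff_injective_aeval, injective_iff_map_eq_zero]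
  intro q hq
  by_contra hq0
  obtain ⟨Q, hQ, rfl⟩ := exists_isHomogeneous_dehomogenize_eq q
  refine hc Q _ hQ (by rintro rfl; simp at hq0) ?_
  rw [hQ.aeval_eq_pow_mul_aeval_dehomogenize hc0, hq, mul_zero]

theorem adjoin_range_le_adjoin_range_div {g h : MvPolynomial (Fin (n + 1)) k} {m : ℕ}
    (hg : g.IsHomogeneous m) (hh : h.IsHomogeneous (m + 1)) (hc0 : c 0 ≠ 0)
    (hgh : aeval c (g + h) = 0) (hh0 : aeval c h ≠ 0) :
    adjoin k (range c) ≤ adjoin k (range fun j : Fin n => c j.succ / c 0) := by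
  set v : Fin n → K := fun j => c j.succ / c 0
  have hv : ∀ p : MvPolynomial (Fin n) k, aeval v p ∈ adjoin k (range v) := fun p =>
    algebra_adjoin_le_adjoin k _ (Algebra.adjoin_range_eq_range_aeval k v ▸ ⟨p, rfl⟩)
  set G := aeval v (dehomogenize n g)
  set H := aeval v (dehomogenize n h)
  have hH : H ≠ 0 := fun hH =>
    hh0 (by rw [hh.aeval_eq_pow_mul_aeval_dehomogenize hc0]; exact mul_eq_zero_of_right _ hH)
  have hc0_eq : c 0 = -G / H := by
    rw [map_add, hg.aeval_eq_pow_mul_aeval_dehomogenize hc0,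
      hh.aeval_eq_pow_mul_aeval_dehomogenize hc0] at hgh
    have hGH : c 0 ^ m * (G + c 0 * H) = 0 := by linear_combination hgh
    rw [eq_div_iff hH]
    linear_combination (mul_eq_zero.mp hGH).resolve_left (pow_ne_zero _ hc0)
  have hc0_mem : c 0 ∈ adjoin k (range v) := by
    rw [hc0_eq]; exact div_mem (neg_mem (hv _)) (hv _)
  rw [adjoin_le_iff]
  rintro _ ⟨i, rfl⟩
  induction i using Fin.cases with
  | zero => exact hc0_mem
  | succ j =>
    rw [← mul_div_cancel₀ (c j.succ) hc0]
    exact mul_mem hc0_mem (subset_adjoin k _ ⟨j, rfl⟩)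

theorem nonempty_algEquiv_fractionRing_of_adjoin_eq_top (hgen : adjoin k (range c) = ⊤)
    (hc : ∀ (Q : MvPolynomial (Fin (n + 1)) k) (N : ℕ), Q.IsHomogeneous N → Q ≠ 0 →
      aeval c Q ≠ 0)
    {g h : MvPolynomial (Fin (n + 1)) k} {m : ℕ} (hg : g.IsHomogeneous m)
    (hh : h.IsHomogeneous (m + 1)) (hh0 : h ≠ 0) (hgh : aeval c (g + h) = 0) :
    Nonempty (K ≃ₐ[k] FractionRing (MvPolynomial (Fin n) k)) := by
  have hc0 : c 0 ≠ 0 := by simpa using hc (X 0) 1 (isHomogeneous_X _ _) (X_ne_zero _)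
  have hv := algebraicIndependent_div_of_aeval_ne_zero hc
  have hadj : adjoin k (range fun j : Fin n => c j.succ / c 0) = ⊤ :=
    top_le_iff.mp (hgen ▸ adjoin_range_le_adjoin_range_div hg hh hc0 hgh (hc h _ hh hh0))
  exact ⟨((hv.aevalEquivField.trans (equivOfEq hadj)).trans topEquiv).symm⟩

end FunctionField

theorem IsFractionRing.adjoin_range_eq_top_of_surjective {k ι A K : Type*} [Field k]
    [CommRing A] [Algebra k A] [Field K] [Algebra k K] [Algebra A K] [IsFractionRing A K]
    [IsScalarTower k A K] {φ : MvPolynomial ι k →ₐ[k] A} (hφ : Function.Surjective φ) :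
    adjoin k (range fun i => algebraMap A K (φ (X i))) = ⊤ := by
  have hcomp : (IsScalarTower.toAlgHom k A K).comp φ =
      aeval fun i => algebraMap A K (φ (X i)) := by
    ext i; simp
  have hrange : (IsScalarTower.toAlgHom k A K).range =
      Algebra.adjoin k (range fun i => algebraMap A K (φ (X i))) := by
    rw [Algebra.adjoin_range_eq_range_aeval, ← hcomp, AlgHom.range_comp,
      (AlgHom.range_eq_top _).mpr hφ, Algebra.map_top]
  rw [← IsFractionRing.algHom_fieldRange_eq_of_comp_eq_of_range_eq (f := AlgHom.id k K)
    (by ext; simp) hrange, AlgHom.fieldRange_eq_top]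
  exact Function.surjective_id

theorem affine_hypersurface_with_multiplicity_rational_general
    (k : Type*) [Field k] (n d : ℕ) (hd : 2 ≤ d)
    (g h : MvPolynomial (Fin (n + 1)) k)
    (hg : g.IsHomogeneous (d - 1)) (hh : h.IsHomogeneous d)
    (hg0 : g ≠ 0) (hh0 : h ≠ 0) (hprime : Prime (g + h)) :
    Nonempty
      (FractionRing (MvPolynomial (Fin (n + 1)) k ⧸ Ideal.span {g + h}) ≃ₐ[k]
        FractionRing (MvPolynomial (Fin n) k)) := by
  set I := Ideal.span {g + h}
  have : I.IsPrime := (Ideal.span_singleton_prime hprime.ne_zero).mpr hprime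
  set c : Fin (n + 1) → FractionRing (MvPolynomial (Fin (n + 1)) k ⧸ I) :=
    fun i => algebraMap _ _ (Ideal.Quotient.mkₐ k I (X i))
  have haeval : ∀ p, aeval c p = 0 ↔ g + h ∣ p := fun p => by
    have hcomp : aeval c = (IsScalarTower.toAlgHom k _ _).comp (Ideal.Quotient.mkₐ k I) := by
      ext i; simp [c]
    rw [hcomp, AlgHom.comp_apply, IsScalarTower.coe_toAlgHom', IsFractionRing.to_map_eq_zero_iff,
      Ideal.Quotient.mkₐ_eq_mk, Ideal.Quotient.eq_zero_iff_mem, Ideal.mem_span_singleton]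
  have hh' : h.IsHomogeneous (d - 1 + 1) := by rwa [Nat.sub_add_cancel (by omega)]
  refine nonempty_algEquiv_fractionRing_of_adjoin_eq_top
    (IsFractionRing.adjoin_range_eq_top_of_surjective (Ideal.Quotient.mkₐ_surjective k I))
    (fun Q N hQ hQ0 hcQ => ?_) hg hh' hh0 ((haeval _).mpr dvd_rfl)
  exact add_not_dvd_of_isHomogeneous hg hh' hg0 hh0 (Nat.lt_succ_self _) hQ hQ0
    ((haeval Q).mp hcQ)

/-- Affine-chart form of Lemma 2.1: a degree-`d` hypersurface with multiplicity `d-1`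
at a rational point is rational.  In the affine chart centered at the point, the
hypersurface is `{g + h = 0}` with `g` homogeneous of degree `d-1` and `h` homogeneous
of degree `d`, and the conclusion is that its function field is purely transcendental
of transcendence degree `n` over `k`. -/
theorem affine_hypersurface_with_multiplicity_rational
    (k : Type*) [Field k] (n d : ℕ) (hn : 1 ≤ n) (hd : 2 ≤ d)
    (g h : MvPolynomial (Fin (n + 1)) k)
    (hg : g.IsHomogeneous (d - 1)) (hh : h.IsHomogeneous d)
    (hg0 : g ≠ 0) (hh0 : h ≠ 0) (hprime : Prime (g + h)) :
    Nonempty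
      (FractionRing (MvPolynomial (Fin (n + 1)) k ⧸ Ideal.span {g + h}) ≃ₐ[k]
        FractionRing (MvPolynomial (Fin n) k)) :=
  affine_hypersurface_with_multiplicity_rational_general k n d hd g h hg hh hg0 hh0 hprime
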